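/- (Van der Corput lemma with amplitude) Let ψ be real-valued and C^k on (a,b) with k ≥ 2 and |ψ^{(k)}(x)| ≥ c > 0 on (a,b), and let h be C¹ on (a,b). Then for every λ ≠ 0, |∫_a^b e^{iλψ(x)} h(x) dx| ≤ (5·2^{k-1} − 2)·|cλ|^{-1/k}·( |h(b)| + ∫_a^b |h'(x)| dx ). -/

import Mathlib

/-!
Write `λψ = φ` and `μ = |cλ|`, so that `|φ⁽ᵏ⁾| ≥ μ`. The pure oscillatory integral satisfies
`|∫ᵤᵛ e^{iφ}| ≤ cₖ μ^{-1/k}` with `cₖ = 5·2^{k-1} - 2`, by induction on `k`. For `k = 1` and `φ'`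
monotone, integrate by parts against `1/(iφ')`, whose total variation is at most `1/μ`. For the
step, `φ⁽ᵏ⁾` grows at rate `μ`, so `|φ⁽ᵏ⁾| < μδ` only on an interval of length `2δ`: bound the
integral trivially there and by the induction hypothesis (with `μδ` for `μ`) on the two remaining
intervals, then choose `δ = μ^{-1/(k+1)}`; this gives `cₖ₊₁ = 2cₖ + 2`.

The amplitude is handled by a further integration by parts against the primitive
`G(t) = ∫ₐᵗ e^{iφ}`, bounded by `cₖ μ^{-1/k}`. Since `ψ` is only smooth on `(a, b)`, this bound is
first proved on inner intervals and then extended to `[a, b]` by continuity of the primitive.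
-/

open intervalIntegral

open Set MeasureTheory Complex

theorem IsPreconnected.forall_le_or_forall_le_neg {X : Type*} [TopologicalSpace X] {s : Set X}
    {f : X → ℝ} {ν : ℝ} (hs : IsPreconnected s) (hf : ContinuousOn f s) (hν : 0 < ν)
    (hlow : ∀ x ∈ s, ν ≤ |f x|) : (∀ x ∈ s, ν ≤ f x) ∨ (∀ x ∈ s, f x ≤ -ν) := by
  by_contra! ⟨⟨x, hx, hfx⟩, ⟨y, hy, hfy⟩⟩
  have hx' : f x ≤ -ν := by cases abs_cases (f x) <;> linarith [hlow x hx]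
  have hy' : ν ≤ f y := by cases abs_cases (f y) <;> linarith [hlow y hy]
  obtain ⟨z, hz, hz0⟩ := hs.intermediate_value hx hy hf
    (show (0 : ℝ) ∈ Icc (f x) (f y) from ⟨by linarith, by linarith⟩)
  have := hlow z hz
  rw [hz0, abs_zero] at this
  linarith

theorem intervalIntegrable_of_continuousOn_Ioo {E : Type*} [NormedAddCommGroup E]
    {f : ℝ → E} {a b M : ℝ} (hab : a ≤ b) (hf : ContinuousOn f (Ioo a b))
    (hM : ∀ x ∈ Ioo a b, ‖f x‖ ≤ M) : IntervalIntegrable f volume a b := by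
  rw [intervalIntegrable_iff_integrableOn_Ioo_of_le hab]
  exact (integrableOn_const (C := M) measure_Ioo_lt_top.ne).mono'
    (hf.aestronglyMeasurable measurableSet_Ioo)
    ((ae_restrict_iff' measurableSet_Ioo).2 (.of_forall hM))

theorem norm_integral_mul_deriv_le {u u' v v' : ℝ → ℂ} {a b M : ℝ} (hab : a ≤ b)
    (hu : ContinuousOn u (Icc a b)) (hv : ContinuousOn v (Icc a b))
    (huu' : ∀ x ∈ Ioo a b, HasDerivAt u (u' x) x) (hvv' : ∀ x ∈ Ioo a b, HasDerivAt v (v' x) x)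
    (hu' : IntervalIntegrable u' volume a b) (hv' : IntervalIntegrable v' volume a b)
    (hM : ∀ x ∈ Icc a b, ‖v x‖ ≤ M) :
    ‖∫ x in a..b, u x * v' x‖ ≤ ‖u b * v b - u a * v a‖ + M * ∫ x in a..b, ‖u' x‖ := by
  rw [← uIcc_of_le hab] at hu hv hM
  rw [integral_mul_deriv_eq_deriv_mul_of_hasDerivAt hu hv (by simpa [hab] using huu')
    (by simpa [hab] using hvv') hu' hv', mul_comm M, ← intervalIntegral.integral_mul_const]
  refine (norm_sub_le _ _).trans (add_le_add_right ?_ _)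
  refine (intervalIntegral.norm_integral_le_integral_norm hab).trans <| integral_mono_on hab
    (hu'.mul_continuousOn hv).norm (hu'.norm.mul_const M) fun x hx => ?_
  rw [norm_mul]
  exact mul_le_mul_of_nonneg_left (hM x (uIcc_of_le hab ▸ hx)) (norm_nonneg _)

theorem norm_integral_le_of_forall_mem_Ioo {E : Type*} [NormedAddCommGroup E] [NormedSpace ℝ E]
    {f : ℝ → E} {a b K : ℝ} (hab : a < b) (hfi : IntervalIntegrable f volume a b)
    (hK : ∀ u ∈ Ioo a b, ∀ v ∈ Ioo a b, ‖∫ x in u..v, f x‖ ≤ K) {u v : ℝ}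
    (hu : u ∈ Icc a b) (hv : v ∈ Icc a b) : ‖∫ x in u..v, f x‖ ≤ K := by
  have hIcc : uIcc a b = Icc a b := uIcc_of_le hab.le
  set F : ℝ → E := fun t => ∫ x in a..t, f x
  have hF : ContinuousOn F (Icc a b) := hIcc ▸ continuousOn_primitive_interval' hfi left_mem_uIcc
  have hsub : ∀ p ∈ Icc a b ×ˢ Icc a b, ∫ x in p.1..p.2, f x = F p.2 - F p.1 := fun p hp =>
    (integral_interval_sub_left (hfi.mono_set (uIcc_subset_uIcc left_mem_uIcc
      (Icc_subset_uIcc hp.2))) (hfi.mono_set (uIcc_subset_uIcc left_mem_uIcc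
      (Icc_subset_uIcc hp.1)))).symm
  have hg : ContinuousOn (fun p : ℝ × ℝ => ‖F p.2 - F p.1‖) (Icc a b ×ˢ Icc a b) :=
    ((hF.comp continuousOn_snd fun p hp => hp.2).sub
      (hF.comp continuousOn_fst fun p hp => hp.1)).norm
  have hcl : (u, v) ∈ closure (Ioo a b ×ˢ Ioo a b) := by
    rw [closure_prod_eq, closure_Ioo hab.ne]
    exact ⟨hu, hv⟩
  have hIoo : Ioo a b ×ˢ Ioo a b ⊆ Icc a b ×ˢ Icc a b :=
    prod_mono Ioo_subset_Icc_self Ioo_subset_Icc_self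
  rw [hsub (u, v) ⟨hu, hv⟩]
  refine ContinuousWithinAt.closure_le hcl ((hg _ ⟨hu, hv⟩).mono hIoo) continuousWithinAt_const
    fun p hp => ?_
  rw [← hsub p (hIoo hp)]
  exact hK _ hp.1 _ hp.2

theorem norm_integral_mul_le_of_norm_primitive_le {f h h' : ℝ → ℂ} {a b K : ℝ} (hab : a ≤ b)
    (hfc : ContinuousOn f (Ioo a b)) (hfi : IntervalIntegrable f volume a b)
    (hK : ∀ t ∈ Icc a b, ‖∫ x in a..t, f x‖ ≤ K) (hh : ContinuousOn h (Icc a b))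
    (hh' : ∀ x ∈ Ioo a b, HasDerivAt h (h' x) x) (hh'i : IntervalIntegrable h' volume a b) :
    ‖∫ x in a..b, f x * h x‖ ≤ K * (‖h b‖ + ∫ x in a..b, ‖h' x‖) := by
  have hIcc : uIcc a b = Icc a b := uIcc_of_le hab
  set G : ℝ → ℂ := fun t => ∫ x in a..t, f x
  have hG : ContinuousOn G (Icc a b) := hIcc ▸ continuousOn_primitive_interval' hfi left_mem_uIcc
  have hG' : ∀ x ∈ Ioo a b, HasDerivAt G (f x) x := fun x hx =>
    integral_hasDerivAt_right (hfi.mono_set (uIcc_subset_uIcc left_mem_uIcc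
      (Icc_subset_uIcc (Ioo_subset_Icc_self hx))))
      (hfc.stronglyMeasurableAtFilter isOpen_Ioo x hx) (hfc.continuousAt (isOpen_Ioo.mem_nhds hx))
  have hIBP := norm_integral_mul_deriv_le hab hh hG hh' hG' hh'i hfi hK
  simp only [G, integral_same, mul_zero, sub_zero, norm_mul] at hIBP
  calc ‖∫ x in a..b, f x * h x‖ = ‖∫ x in a..b, h x * f x‖ := by simp_rw [mul_comm]
    _ ≤ _ := hIBP
    _ ≤ _ := by nlinarith [hK b (right_mem_Icc.2 hab), norm_nonneg (h b)]

theorem norm_integral_cexp_le_of_mul_deriv_eq_neg_one {φ φ' s s' : ℝ → ℝ} {a b : ℝ} (hab : a ≤ b)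
    (hφ : ∀ x ∈ Icc a b, HasDerivAt φ (φ' x) x) (hφ' : ContinuousOn φ' (Icc a b))
    (hs : ∀ x ∈ Icc a b, HasDerivAt s (s' x) x) (hs' : IntervalIntegrable s' volume a b)
    (hsφ' : ∀ x ∈ Icc a b, s x * φ' x = -1) :
    ‖∫ x in a..b, cexp (I * φ x)‖ ≤ |s b| + |s a| + ∫ x in a..b, |s' x| := by
  have hv : ∀ x ∈ Icc a b,
      HasDerivAt (fun y => cexp (I * φ y)) (cexp (I * φ x) * (I * φ' x)) x :=
    fun x hx => ((hφ x hx).ofReal_comp.const_mul I).cexp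
  have hv_cont : ContinuousOn (fun y => cexp (I * φ y)) (Icc a b) := fun x hx =>
    (hv x hx).continuousAt.continuousWithinAt
  have hs_cont : ContinuousOn s (Icc a b) := fun x hx => (hs x hx).continuousAt.continuousWithinAt
  have hIBP := norm_integral_mul_deriv_le (M := 1) (u := fun x => I * s x)
    (u' := fun x => I * s' x) hab
    (continuousOn_const.mul (continuous_ofReal.comp_continuousOn hs_cont)) hv_cont
    (fun x hx => (hs x (Ioo_subset_Icc_self hx)).ofReal_comp.const_mul I)
    (fun x hx => hv x (Ioo_subset_Icc_self hx))
    (IntervalIntegrable.const_mul ⟨hs'.1.ofReal, hs'.2.ofReal⟩ I)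
    (ContinuousOn.intervalIntegrable (uIcc_of_le hab ▸ hv_cont.mul
      (continuousOn_const.mul (continuous_ofReal.comp_continuousOn hφ'))))
    (fun x _ => (norm_exp_I_mul_ofReal _).le)
  have hintegrand : ∀ x ∈ uIcc a b,
      I * s x * (cexp (I * φ x) * (I * φ' x)) = cexp (I * φ x) := fun x hx => by
    have : (s x : ℂ) * φ' x = -1 := by exact_mod_cast hsφ' x (uIcc_of_le hab ▸ hx)
    linear_combination (I * I * cexp (I * φ x)) * this - cexp (I * φ x) * I_mul_I
  have hnorm : ∀ x, ‖I * (s x : ℂ) * cexp (I * φ x)‖ = |s x| := by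
    simp [norm_exp_I_mul_ofReal]
  rw [integral_congr hintegrand] at hIBP
  refine hIBP.trans ?_
  rw [one_mul, ← hnorm, ← hnorm]
  gcongr
  · exact norm_sub_le _ _
  · simp

theorem norm_integral_cexp_le_of_deriv {φ φ' φ'' : ℝ → ℝ} {a b ν : ℝ} (hab : a ≤ b) (hν : 0 < ν)
    (hφ : ∀ x ∈ Icc a b, HasDerivAt φ (φ' x) x) (hφ' : ∀ x ∈ Icc a b, HasDerivAt φ' (φ'' x) x)
    (hφ'' : ∀ x ∈ Icc a b, 0 ≤ φ'' x) (hlow : ∀ x ∈ Icc a b, ν ≤ |φ' x|) :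
    ‖∫ x in a..b, cexp (I * φ x)‖ ≤ 2 / ν := by
  have hne : ∀ x ∈ Icc a b, φ' x ≠ 0 := fun x hx h0 => by
    have := hlow x hx
    rw [h0, abs_zero] at this
    linarith
  set s : ℝ → ℝ := fun x => -(φ' x)⁻¹
  set s' : ℝ → ℝ := fun x => φ'' x / φ' x ^ 2
  have hs : ∀ x ∈ Icc a b, HasDerivAt s (s' x) x := fun x hx => by
    simpa [s, s', neg_div] using ((hφ' x hx).fun_inv (hne x hx)).fun_neg
  have hs'_nonneg : ∀ x ∈ Icc a b, 0 ≤ s' x := fun x hx => div_nonneg (hφ'' x hx) (sq_nonneg _)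
  have hs_cont : ContinuousOn s (Icc a b) := fun x hx => (hs x hx).continuousAt.continuousWithinAt
  have hs'_int : IntervalIntegrable s' volume a b :=
    intervalIntegrable_deriv_of_nonneg (uIcc_of_le hab ▸ hs_cont)
      (by simpa [hab] using fun x hx => hs x (Ioo_subset_Icc_self hx))
      (by simpa [hab] using fun x hx => hs'_nonneg x (Ioo_subset_Icc_self hx))
  have hvar : ∫ x in a..b, |s' x| = s b - s a := by
    rw [← integral_eq_sub_of_hasDerivAt (fun x hx => hs x (uIcc_of_le hab ▸ hx)) hs'_int]
    exact integral_congr fun x hx => abs_of_nonneg (hs'_nonneg x (uIcc_of_le hab ▸ hx))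
  have hφ'_cont : ContinuousOn φ' (Icc a b) := fun x hx =>
    (hφ' x hx).continuousAt.continuousWithinAt
  have hs_range : (∀ x ∈ Icc a b, -ν⁻¹ ≤ s x ∧ s x ≤ 0) ∨
      (∀ x ∈ Icc a b, 0 ≤ s x ∧ s x ≤ ν⁻¹) := by
    refine (isPreconnected_Icc.forall_le_or_forall_le_neg hφ'_cont hν hlow).imp
      (fun h x hx => ?_) (fun h x hx => ?_)
    · have := h x hx
      exact ⟨neg_le_neg (inv_anti₀ hν this), neg_nonpos.2 (inv_nonneg.2 (by linarith))⟩
    · have := h x hx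
      simp only [s, ← inv_neg]
      exact ⟨inv_nonneg.2 (by linarith), inv_anti₀ hν (by linarith)⟩
  refine (norm_integral_cexp_le_of_mul_deriv_eq_neg_one hab hφ hφ'_cont hs hs'_int
    fun x hx => by simp [s, hne x hx]).trans ?_
  have ha : a ∈ Icc a b := left_mem_Icc.2 hab
  have hb : b ∈ Icc a b := right_mem_Icc.2 hab
  rw [hvar, div_eq_mul_inv]
  rcases hs_range with h | h
  · rw [abs_of_nonpos (h b hb).2, abs_of_nonpos (h a ha).2]
    linarith [(h a ha).1]
  · rw [abs_of_nonneg (h b hb).1, abs_of_nonneg (h a ha).1]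
    linarith [(h b hb).2]

theorem ContDiffOn.hasDerivAt_iteratedDeriv {𝕜 F : Type*} [NontriviallyNormedField 𝕜]
    [NormedAddCommGroup F] [NormedSpace 𝕜 F] {f : 𝕜 → F} {U : Set 𝕜} {n m : ℕ} {x : 𝕜}
    (hf : ContDiffOn 𝕜 n f U) (hU : IsOpen U) (hm : m < n) (hx : x ∈ U) :
    HasDerivAt (iteratedDeriv m f) (iteratedDeriv (m + 1) f x) x := by
  have hd : DifferentiableOn 𝕜 (iteratedDeriv m f) U :=
    (hf.differentiableOn_iteratedDerivWithin (by exact_mod_cast hm) hU.uniqueDiffOn).congr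
      fun y hy => (iteratedDerivWithin_of_isOpen hU hy).symm
  rw [iteratedDeriv_succ]
  exact ((hd x hx).differentiableAt (hU.mem_nhds hx)).hasDerivAt

theorem ContDiffOn.continuousOn_iteratedDeriv_of_isOpen {𝕜 F : Type*} [NontriviallyNormedField 𝕜]
    [NormedAddCommGroup F] [NormedSpace 𝕜 F] {f : 𝕜 → F} {U : Set 𝕜} {n : ℕ}
    (hf : ContDiffOn 𝕜 n f U) (hU : IsOpen U) : ContinuousOn (iteratedDeriv n f) U :=
  (hf.continuousOn_iteratedDerivWithin le_rfl hU.uniqueDiffOn).congr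
    fun _ hy => (iteratedDerivWithin_of_isOpen hU hy).symm

theorem exists_mem_Icc_sign_change {g : ℝ → ℝ} {a b : ℝ} (hab : a ≤ b)
    (hg : ContinuousOn g (Icc a b)) :
    ∃ x₀ ∈ Icc a b, (a < x₀ → g x₀ ≤ 0) ∧ (x₀ < b → 0 ≤ g x₀) := by
  by_cases ha : 0 ≤ g a
  · exact ⟨a, left_mem_Icc.2 hab, fun h => absurd h (lt_irrefl a), fun _ => ha⟩
  by_cases hb : g b ≤ 0
  · exact ⟨b, right_mem_Icc.2 hab, fun _ => hb, fun h => absurd h (lt_irrefl b)⟩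
  obtain ⟨x₀, hx₀, hgx₀⟩ := intermediate_value_Icc hab hg
    (show (0 : ℝ) ∈ Icc (g a) (g b) from ⟨by linarith, by linarith⟩)
  exact ⟨x₀, hx₀, fun _ => hgx₀.le, fun _ => hgx₀.ge⟩

theorem norm_integral_le_of_growth {f : ℝ → ℂ} {g : ℝ → ℝ} {a b μ δ C : ℝ} (hab : a ≤ b)
    (hμ : 0 ≤ μ) (hδ : 0 ≤ δ) (hC : 0 ≤ C) (hf : ∀ x, ‖f x‖ ≤ 1)
    (hfi : IntervalIntegrable f volume a b) (hg : ContinuousOn g (Icc a b))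
    (hgrow : ∀ x ∈ Icc a b, ∀ y ∈ Icc a b, x ≤ y → μ * (y - x) ≤ g y - g x)
    (hbound : ∀ u v, a ≤ u → u ≤ v → v ≤ b → (∀ x ∈ Icc u v, μ * δ ≤ |g x|) →
      ‖∫ x in u..v, f x‖ ≤ C) :
    ‖∫ x in a..b, f x‖ ≤ 2 * C + 2 * δ := by
  obtain ⟨x₀, hx₀, hneg, hpos⟩ := exists_mem_Icc_sign_change hab hg
  -- `|g| ≥ μδ` outside `(x₀ - δ, x₀ + δ)`
  set x₁ := max a (x₀ - δ)
  set x₂ := min b (x₀ + δ)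
  have hx₁ : x₁ ∈ Icc a b := ⟨le_max_left _ _, max_le hab (by linarith [hx₀.2])⟩
  have hx₂ : x₂ ∈ Icc a b := ⟨le_min hab (by linarith [hx₀.1]), min_le_left _ _⟩
  have hint : ∀ u ∈ Icc a b, ∀ v ∈ Icc a b, IntervalIntegrable f volume u v := fun u hu v hv =>
    hfi.mono_set (uIcc_subset_uIcc (Icc_subset_uIcc hu) (Icc_subset_uIcc hv))
  have hleft : ‖∫ x in a..x₁, f x‖ ≤ C := by
    rcases le_or_gt (x₀ - δ) a with h | h
    · rw [show x₁ = a from max_eq_left h, integral_same, norm_zero]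
      exact hC
    refine hbound a x₁ le_rfl hx₁.1 hx₁.2 fun x hx => ?_
    have hx₁_eq : x₁ = x₀ - δ := max_eq_right h.le
    have := hgrow x ⟨hx.1, hx.2.trans hx₁.2⟩ x₀ hx₀ (by linarith [hx.2])
    have := hneg (by linarith)
    have : μ * δ ≤ μ * (x₀ - x) := mul_le_mul_of_nonneg_left (by linarith [hx.2]) hμ
    exact le_abs.2 (Or.inr (by linarith))
  have hright : ‖∫ x in x₂..b, f x‖ ≤ C := by
    rcases le_or_gt b (x₀ + δ) with h | h
    · rw [show x₂ = b from min_eq_left h, integral_same, norm_zero]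
      exact hC
    refine hbound x₂ b hx₂.1 hx₂.2 le_rfl fun x hx => ?_
    have hx₂_eq : x₂ = x₀ + δ := min_eq_right h.le
    have := hgrow x₀ hx₀ x ⟨hx₂.1.trans hx.1, hx.2⟩ (by linarith [hx.1])
    have := hpos (by linarith)
    have : μ * δ ≤ μ * (x - x₀) := mul_le_mul_of_nonneg_left (by linarith [hx.1]) hμ
    exact le_abs.2 (Or.inl (by linarith))
  have hmid : ‖∫ x in x₁..x₂, f x‖ ≤ 2 * δ := by
    refine (norm_integral_le_of_norm_le_const fun x _ => hf x).trans ?_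
    rw [one_mul, abs_le]
    have : x₁ ≤ x₂ := (max_le hx₀.1 (by linarith)).trans (le_min hx₀.2 (by linarith))
    constructor <;> linarith [le_max_right a (x₀ - δ), min_le_right b (x₀ + δ)]
  rw [← integral_add_adjacent_intervals (hint a (left_mem_Icc.2 hab) x₁ hx₁)
    (hint x₁ hx₁ b (right_mem_Icc.2 hab)), ← integral_add_adjacent_intervals
    (hint x₁ hx₁ x₂ hx₂) (hint x₂ hx₂ b (right_mem_Icc.2 hab))]
  calc _ ≤ ‖∫ x in a..x₁, f x‖ + (‖∫ x in x₁..x₂, f x‖ + ‖∫ x in x₂..b, f x‖) :=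
        (norm_add_le _ _).trans (add_le_add_right (norm_add_le _ _) _)
    _ ≤ 2 * C + 2 * δ := by linarith

def vdcConst (k : ℕ) : ℝ := 5 * 2 ^ (k - 1) - 2

theorem vdcConst_nonneg (k : ℕ) : 0 ≤ vdcConst k := by
  have : (1 : ℝ) ≤ 2 ^ (k - 1) := one_le_pow₀ one_le_two
  unfold vdcConst
  linarith

theorem vdcConst_succ {k : ℕ} (hk : 1 ≤ k) : vdcConst (k + 1) = 2 * vdcConst k + 2 := by
  obtain ⟨j, rfl⟩ := Nat.exists_eq_add_of_le hk
  simp only [vdcConst, Nat.add_sub_cancel_left, add_tsub_cancel_right]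
  ring

theorem mul_rpow_neg_one_div_succ_rpow {μ : ℝ} {k : ℕ} (hμ : 0 < μ) (hk : k ≠ 0) :
    (μ * μ ^ (-(1 : ℝ) / (k + 1 : ℕ))) ^ (-(1 : ℝ) / k) = μ ^ (-(1 : ℝ) / (k + 1 : ℕ)) := by
  have hk' : (k : ℝ) ≠ 0 := Nat.cast_ne_zero.2 hk
  have hexp : 1 + -(1 : ℝ) / (k + 1 : ℕ) = k / (k + 1) := by
    push_cast
    field_simp
    ring
  rw [← Real.rpow_one_add' hμ.le (by rw [hexp]; positivity), hexp, ← Real.rpow_mul hμ.le]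
  congr 1
  push_cast
  field_simp

theorem norm_integral_cexp_le_of_le_iteratedDeriv_succ {φ : ℝ → ℝ} {U : Set ℝ} {a b μ : ℝ}
    {k : ℕ} (hk : 1 ≤ k) (hU : IsOpen U) (hφ : ContDiffOn ℝ (k + 1 : ℕ) φ U)
    (hsub : Icc a b ⊆ U) (hab : a ≤ b) (hμ : 0 < μ)
    (hlow : ∀ x ∈ Icc a b, μ ≤ iteratedDeriv (k + 1) φ x)
    (hprev : ∀ u v ν, a ≤ u → u ≤ v → v ≤ b → 0 < ν →
      (∀ x ∈ Icc u v, ν ≤ |iteratedDeriv k φ x|) →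
      ‖∫ x in u..v, cexp (I * φ x)‖ ≤ vdcConst k * ν ^ (-(1 : ℝ) / k)) :
    ‖∫ x in a..b, cexp (I * φ x)‖ ≤ vdcConst (k + 1) * μ ^ (-(1 : ℝ) / (k + 1 : ℕ)) := by
  -- chosen so that `(μδ)^(-1/k) = δ`: the middle piece and the outer pieces cost the same
  set δ := μ ^ (-(1 : ℝ) / (k + 1 : ℕ))
  have hδ : 0 < δ := Real.rpow_pos_of_pos hμ _
  have hderiv : ∀ x ∈ U, HasDerivAt (iteratedDeriv k φ) (iteratedDeriv (k + 1) φ x) x :=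
    fun x hx => hφ.hasDerivAt_iteratedDeriv hU (Nat.lt_succ_self k) hx
  have hg : ContinuousOn (iteratedDeriv k φ) (Icc a b) := fun x hx =>
    (hderiv x (hsub hx)).continuousAt.continuousWithinAt
  have hgrow := (convex_Icc a b).mul_sub_le_image_sub_of_le_deriv hg
    (fun x hx => (hderiv x (hsub (interior_subset hx))).differentiableAt.differentiableWithinAt)
    (fun x hx => (hderiv x (hsub (interior_subset hx))).deriv ▸ hlow x (interior_subset hx))
  have hfi : IntervalIntegrable (fun x => cexp (I * φ x)) volume a b := by
    have := hφ.continuousOn.mono hsub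
    exact ContinuousOn.intervalIntegrable (uIcc_of_le hab ▸ by fun_prop)
  have := norm_integral_le_of_growth hab hμ.le hδ.le
    (mul_nonneg (vdcConst_nonneg k) hδ.le) (fun x => (norm_exp_I_mul_ofReal (φ x)).le) hfi hg hgrow
    fun u v hu huv hv hν => by
      have hνδ : (μ * δ) ^ (-(1 : ℝ) / k) = δ := mul_rpow_neg_one_div_succ_rpow hμ (by omega)
      exact hνδ ▸ hprev u v (μ * δ) hu huv hv (mul_pos hμ hδ) hν
  rw [vdcConst_succ hk]
  linarith

theorem norm_integral_cexp_neg (φ : ℝ → ℝ) (a b : ℝ) :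
    ‖∫ x in a..b, cexp (I * ↑(-φ x))‖ = ‖∫ x in a..b, cexp (I * φ x)‖ := by
  have : ∀ x, cexp (I * ↑(-φ x)) = (starRingEnd ℂ) (cexp (I * φ x)) := fun x => by
    rw [← Complex.exp_conj, map_mul, conj_I, conj_ofReal, ofReal_neg]
    ring_nf
  simp_rw [this, intervalIntegral_conj, RCLike.norm_conj]

/-- Signed form of the estimate. It is false for `k = 1` (where `φ'` must also be monotone), so
the induction starts at `k = 2`. -/
def VanDerCorputBound (k : ℕ) : Prop :=
  ∀ ⦃φ : ℝ → ℝ⦄ ⦃U : Set ℝ⦄ ⦃a b μ : ℝ⦄, IsOpen U → ContDiffOn ℝ k φ U → Icc a b ⊆ U →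
    a ≤ b → 0 < μ → (∀ x ∈ Icc a b, μ ≤ iteratedDeriv k φ x) →
    ‖∫ x in a..b, cexp (I * φ x)‖ ≤ vdcConst k * μ ^ (-(1 : ℝ) / k)

theorem VanDerCorputBound.norm_integral_le {k : ℕ} (h : VanDerCorputBound k) {φ : ℝ → ℝ}
    {U : Set ℝ} {a b μ : ℝ} (hU : IsOpen U) (hφ : ContDiffOn ℝ k φ U) (hsub : uIcc a b ⊆ U)
    (hμ : 0 < μ) (hlow : ∀ x ∈ uIcc a b, μ ≤ |iteratedDeriv k φ x|) :
    ‖∫ x in a..b, cexp (I * φ x)‖ ≤ vdcConst k * μ ^ (-(1 : ℝ) / k) := by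
  wlog hab : a ≤ b generalizing a b
  · rw [integral_symm, norm_neg]
    exact this (uIcc_comm a b ▸ hsub) (uIcc_comm a b ▸ hlow) (le_of_not_ge hab)
  rw [uIcc_of_le hab] at hsub hlow
  rcases isPreconnected_Icc.forall_le_or_forall_le_neg
    ((hφ.continuousOn_iteratedDeriv_of_isOpen hU).mono hsub) hμ hlow with hpos | hneg
  · exact h hU hφ hsub hab hμ hpos
  · rw [← norm_integral_cexp_neg]
    exact h hU hφ.neg hsub hab hμ fun x hx => by
      rw [iteratedDeriv_fun_neg]
      linarith [hneg x hx]

theorem vanDerCorputBound_two : VanDerCorputBound 2 := by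
  intro φ U a b μ hU hφ hsub hab hμ hlow
  refine norm_integral_cexp_le_of_le_iteratedDeriv_succ le_rfl hU hφ hsub hab hμ hlow
    fun u v ν hu huv hv hν hν_low => ?_
  have hsub' : Icc u v ⊆ Icc a b := Icc_subset_Icc hu hv
  have hd : ∀ m < 2, ∀ x ∈ Icc u v,
      HasDerivAt (iteratedDeriv m φ) (iteratedDeriv (m + 1) φ x) x :=
    fun m hm x hx => hφ.hasDerivAt_iteratedDeriv hU hm (hsub (hsub' hx))
  have := norm_integral_cexp_le_of_deriv huv hν
    (by simpa only [iteratedDeriv_zero, zero_add] using hd 0 two_pos) (hd 1 one_lt_two)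
    (fun x hx => hμ.le.trans (hlow x (hsub' hx))) hν_low
  refine this.trans ?_
  rw [show vdcConst 1 = 3 by norm_num [vdcConst]]
  norm_num [Real.rpow_neg_one, div_eq_mul_inv]
  exact mul_le_mul_of_nonneg_right (by norm_num) (inv_nonneg.2 hν.le)

theorem VanDerCorputBound.succ {k : ℕ} (hk : 2 ≤ k) (h : VanDerCorputBound k) :
    VanDerCorputBound (k + 1) := by
  intro φ U a b μ hU hφ hsub hab hμ hlow
  exact norm_integral_cexp_le_of_le_iteratedDeriv_succ (by omega) hU hφ hsub hab hμ hlow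
    fun u v ν hu huv hv hν hν_low => h.norm_integral_le hU (hφ.of_le (by exact_mod_cast k.le_succ))
      ((uIcc_of_le huv).trans_subset ((Icc_subset_Icc hu hv).trans hsub)) hν
      (uIcc_of_le huv ▸ hν_low)

theorem vanDerCorputBound {k : ℕ} (hk : 2 ≤ k) : VanDerCorputBound k := by
  induction k, hk using Nat.le_induction with
  | base => exact vanDerCorputBound_two
  | succ k hk ih => exact ih.succ hk

theorem norm_integral_cexp_mul_le {ψ : ℝ → ℝ} {U : Set ℝ} {u v c lam : ℝ} {k : ℕ} (hk : 2 ≤ k)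
    (hU : IsOpen U) (hψ : ContDiffOn ℝ k ψ U) (hsub : uIcc u v ⊆ U) (hc : 0 < c) (hlam : lam ≠ 0)
    (hlow : ∀ x ∈ uIcc u v, c ≤ |iteratedDeriv k ψ x|) :
    ‖∫ x in u..v, cexp (I * lam * ψ x)‖ ≤ vdcConst k * |c * lam| ^ (-(1 : ℝ) / k) := by
  simp_rw [mul_assoc I, ← ofReal_mul]
  refine (vanDerCorputBound hk).norm_integral_le hU (contDiffOn_const.mul hψ) hsub
    (abs_pos.2 (mul_ne_zero hc.ne' hlam)) fun x hx => ?_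
  rw [iteratedDeriv_const_mul_field, abs_mul, abs_mul, abs_of_pos hc, mul_comm c]
  exact mul_le_mul_of_nonneg_left (hlow x hx) (abs_nonneg lam)

theorem norm_integral_mul_ofReal_le {f : ℝ → ℂ} {h : ℝ → ℝ} {a b K : ℝ} (hab : a < b)
    (hfc : ContinuousOn f (Ioo a b)) (hfi : IntervalIntegrable f volume a b)
    (hK : ∀ t ∈ Icc a b, ‖∫ x in a..t, f x‖ ≤ K) (hh : ContDiffOn ℝ 1 h (Icc a b)) :
    ‖∫ x in a..b, f x * h x‖ ≤ K * (|h b| + ∫ x in a..b, |derivWithin h (Icc a b) x|) := by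
  have hh' : ∀ x ∈ Ioo a b,
      HasDerivAt (fun y => (h y : ℂ)) ((derivWithin h (Icc a b) x : ℝ) : ℂ) x :=
    fun x hx => by
      rw [derivWithin_of_mem_nhds (Icc_mem_nhds hx.1 hx.2)]
      exact ((hh.differentiableOn one_ne_zero x (Ioo_subset_Icc_self hx)).differentiableAt
        (Icc_mem_nhds hx.1 hx.2)).hasDerivAt.ofReal_comp
  have hh'_int :
      IntervalIntegrable (fun x => ((derivWithin h (Icc a b) x : ℝ) : ℂ)) volume a b := by
    refine ContinuousOn.intervalIntegrable ?_
    rw [uIcc_of_le hab.le]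
    exact continuous_ofReal.comp_continuousOn
      (hh.continuousOn_derivWithin (uniqueDiffOn_Icc hab) le_rfl)
  simpa using norm_integral_mul_le_of_norm_primitive_le hab.le hfc hfi hK
    (continuous_ofReal.comp_continuousOn hh.continuousOn) hh' hh'_int

/-- Van der Corput lemma with amplitude: if `ψ` is real-valued, `Cᵏ` on `(a,b)` with `k ≥ 2`,
`|ψ⁽ᵏ⁾| ≥ c > 0` there, and `h` is `C¹` (up to the endpoints), then for every `λ ≠ 0`,
`|∫_a^b e^{iλψ(x)} h(x) dx| ≤ (5·2^{k-1} − 2) |cλ|^{-1/k} (|h(b)| + ∫_a^b |h'|)`. -/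
theorem van_der_corput_amplitude (a b : ℝ) (hab : a < b) (k : ℕ) (hk : 2 ≤ k)
    (ψ : ℝ → ℝ) (hψ : ContDiffOn ℝ k ψ (Set.Ioo a b))
    (c : ℝ) (hc : 0 < c)
    (hlow : ∀ x ∈ Set.Ioo a b, c ≤ |iteratedDerivWithin k ψ (Set.Ioo a b) x|)
    (h : ℝ → ℝ) (hh : ContDiffOn ℝ 1 h (Set.Icc a b))
    (lam : ℝ) (hlam : lam ≠ 0) :
    ‖∫ x in a..b, Complex.exp (Complex.I * lam * ψ x) * (h x : ℂ)‖
      ≤ (5 * 2 ^ (k - 1) - 2 : ℝ) * |c * lam| ^ (-(1 : ℝ) / k) *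
        (|h b| + ∫ x in a..b, |derivWithin h (Set.Icc a b) x|) := by
  have hf_cont : ContinuousOn (fun x => cexp (I * lam * ψ x)) (Ioo a b) := by
    have := hψ.continuousOn
    fun_prop
  have hf_int : IntervalIntegrable (fun x => cexp (I * lam * ψ x)) volume a b :=
    intervalIntegrable_of_continuousOn_Ioo (M := 1) hab.le hf_cont fun x _ => by
      rw [mul_assoc, ← ofReal_mul, norm_exp_I_mul_ofReal]
  have hinner : ∀ u ∈ Ioo a b, ∀ v ∈ Ioo a b,
      ‖∫ x in u..v, cexp (I * lam * ψ x)‖ ≤ vdcConst k * |c * lam| ^ (-(1 : ℝ) / k) :=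
    fun u hu v hv => norm_integral_cexp_mul_le hk isOpen_Ioo hψ (ordConnected_Ioo.uIcc_subset hu hv)
      hc hlam fun x hx => by
        have hx' := ordConnected_Ioo.uIcc_subset hu hv hx
        simpa [iteratedDerivWithin_of_isOpen isOpen_Ioo hx'] using hlow x hx'
  exact norm_integral_mul_ofReal_le hab hf_cont hf_int
    (fun t ht => norm_integral_le_of_forall_mem_Ioo hab hf_int hinner (left_mem_Icc.2 hab.le) ht) hh
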